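/- The intersection of the union of the three curves E_1 ∪ E_2 ∪ E_3 with the union of the three vertical curves H_1 ∪ H_2 ∪ H_3 is exactly the set of 3n points { P_{l,m} : l ∈ {0,1,2}, m ∈ {0,1,…,n−1} }. -/

import Mathlib

/-! Write `π : G_n → G` for the projection (`Δ_n ⊆ Δ`) and `c_l = 2/3 + l·a`. The curve `E_{k+1}` is
`{(ψ_k (π ζ), ζ)}` with `ψ_k x = ρ^k x - k·a`, an injective affine map of `G` (as `ρ` is a unit of
`ℤ[ρ]`) that fixes every `[c_l]`. Hence each `E_i` meets the vertical line over `[c_l]` exactly in the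
fibre `π⁻¹ [c_l]`, and since `Δ = ℤ + ℤ(1 - ρ)` while `Δ_n = nℤ + ℤ(1 - ρ)`, that fibre consists of
the `n` points `[c_l + m]_n`, `0 ≤ m < n`. -/

open Complex

noncomputable def ρ : ℂ := Complex.exp (2 * Real.pi * Complex.I / 3)

noncomputable def a : ℂ := (1 - ρ) / 3

noncomputable def Δn (n : ℕ) : AddSubgroup ℂ := AddSubgroup.closure {(n : ℂ), 1 - ρ}

noncomputable def Δ : AddSubgroup ℂ := AddSubgroup.closure {1, ρ}

abbrev G : Type := ℂ ⧸ Δ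

abbrev Gn (n : ℕ) : Type := ℂ ⧸ Δn n

abbrev An (n : ℕ) : Type := G × Gn n

noncomputable def mkG : ℂ → G := QuotientAddGroup.mk

noncomputable def mkGn (n : ℕ) : ℂ → Gn n := QuotientAddGroup.mk

/-- The curve E₁ = {([z], [z]ₙ)}. -/
noncomputable def E1 (n : ℕ) : Set (An n) := {p | ∃ z : ℂ, p = (mkG z, mkGn n z)}

/-- The curve E₂ = {([ρz − a], [z]ₙ)}. -/
noncomputable def E2 (n : ℕ) : Set (An n) := {p | ∃ z : ℂ, p = (mkG (ρ * z - a), mkGn n z)}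

/-- The curve E₃ = {([ρ²z − 2a], [z]ₙ)}. -/
noncomputable def E3 (n : ℕ) : Set (An n) := {p | ∃ z : ℂ, p = (mkG (ρ ^ 2 * z - 2 * a), mkGn n z)}

/-- The vertical curve H₁ = {([2/3], ζ)}. -/
noncomputable def H1 (n : ℕ) : Set (An n) := {p | ∃ ζ : Gn n, p = (mkG (2 / 3), ζ)}

/-- The vertical curve H₂ = {([2/3 + a], ζ)}. -/
noncomputable def H2 (n : ℕ) : Set (An n) := {p | ∃ ζ : Gn n, p = (mkG (2 / 3 + a), ζ)}

/-- The vertical curve H₃ = {([2/3 + 2a], ζ)}. -/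
noncomputable def H3 (n : ℕ) : Set (An n) := {p | ∃ ζ : Gn n, p = (mkG (2 / 3 + 2 * a), ζ)}

/-- The point P_{l,m} = ([2/3 + l·a], [2/3 + l·a + m]ₙ). -/
noncomputable def P (n : ℕ) (l : Fin 3) (m : Fin n) : An n :=
  (mkG (2 / 3 + (l.val : ℂ) * a), mkGn n (2 / 3 + (l.val : ℂ) * a + (m.val : ℂ)))

lemma rho_sq_add_rho_add_one : ρ ^ 2 + ρ + 1 = 0 := by
  have hρ := Complex.isPrimitiveRoot_exp 3 (by norm_num)
  have h3 : ρ ^ 3 = 1 := hρ.pow_eq_one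
  have hne : ρ - 1 ≠ 0 := sub_ne_zero.2 (hρ.ne_one (by norm_num))
  refine (mul_eq_zero.1 ?_).resolve_left hne
  linear_combination h3

lemma mem_Δ_iff {x : ℂ} : x ∈ Δ ↔ ∃ u v : ℤ, u + v * ρ = x := by
  simp only [Δ, AddSubgroup.mem_closure_pair, zsmul_eq_mul, mul_one]

lemma mem_Δn_iff {n : ℕ} {x : ℂ} : x ∈ Δn n ↔ ∃ s t : ℤ, s * n + t * (1 - ρ) = x := by
  simp only [Δn, AddSubgroup.mem_closure_pair, zsmul_eq_mul]

lemma Δn_le_Δ (n : ℕ) : Δn n ≤ Δ := by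
  refine (AddSubgroup.closure_le _).2 (Set.insert_subset_iff.2 ⟨?_, Set.singleton_subset_iff.2 ?_⟩)
  · exact mem_Δ_iff.2 ⟨n, 0, by simp⟩
  · exact mem_Δ_iff.2 ⟨1, -1, by push_cast; ring⟩

lemma rho_mul_mem_Δ {x : ℂ} (hx : x ∈ Δ) : ρ * x ∈ Δ := by
  obtain ⟨u, v, rfl⟩ := mem_Δ_iff.1 hx
  exact mem_Δ_iff.2 ⟨-v, u - v, by push_cast; linear_combination (-v : ℂ) * rho_sq_add_rho_add_one⟩

lemma rho_mul_mem_Δ_iff {x : ℂ} : ρ * x ∈ Δ ↔ x ∈ Δ := by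
  refine ⟨fun h ↦ ?_, rho_mul_mem_Δ⟩
  have h3 : ρ ^ 3 = 1 := by linear_combination (ρ - 1) * rho_sq_add_rho_add_one
  convert rho_mul_mem_Δ (rho_mul_mem_Δ h) using 1
  linear_combination (-x) * h3

lemma rho_pow_mul_mem_Δ_iff (k : ℕ) {x : ℂ} : ρ ^ k * x ∈ Δ ↔ x ∈ Δ := by
  induction k with
  | zero => simp
  | succ k ih => rw [pow_succ', mul_assoc, rho_mul_mem_Δ_iff, ih]

lemma mkG_eq_mkG_iff {x y : ℂ} : mkG x = mkG y ↔ x - y ∈ Δ :=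
  QuotientAddGroup.eq_iff_sub_mem

lemma mkGn_eq_mkGn_iff {n : ℕ} {x y : ℂ} : mkGn n x = mkGn n y ↔ x - y ∈ Δn n :=
  QuotientAddGroup.eq_iff_sub_mem

lemma mkG_rho_pow_mul_sub_eq_iff (k : ℕ) (b : ℂ) {z w : ℂ} :
    mkG (ρ ^ k * z - b) = mkG (ρ ^ k * w - b) ↔ mkG z = mkG w := by
  rw [mkG_eq_mkG_iff, mkG_eq_mkG_iff, sub_sub_sub_cancel_right, ← mul_sub,
    rho_pow_mul_mem_Δ_iff]

lemma exists_fin_sub_mem_Δn {n : ℕ} (hn : 0 < n) {x : ℂ} (hx : x ∈ Δ) :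
    ∃ m : Fin n, x - m ∈ Δn n := by
  obtain ⟨u, v, rfl⟩ := mem_Δ_iff.1 hx
  -- `u + vρ = (u + v) - v(1 - ρ)`, and only `u + v` needs reducing mod `n`.
  have hn' : (0 : ℤ) < n := by exact_mod_cast hn
  have hlt : (u + v) % n < n := Int.emod_lt_of_pos _ hn'
  have hmod : (((u + v) % n).toNat : ℤ) = (u + v) % n :=
    Int.toNat_of_nonneg (Int.emod_nonneg _ hn'.ne')
  refine ⟨⟨((u + v) % n).toNat, by omega⟩, mem_Δn_iff.2 ⟨(u + v) / n, -v, ?_⟩⟩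
  have hdiv : ((n * ((u + v) / n) + (u + v) % n : ℤ) : ℂ) = u + v := by
    exact_mod_cast Int.mul_ediv_add_emod (u + v) n
  have hcast : ((((u + v) % n).toNat : ℕ) : ℂ) = (((u + v) % n : ℤ) : ℂ) := by
    exact_mod_cast hmod
  push_cast at hdiv ⊢
  rw [hcast]
  linear_combination hdiv

lemma mkG_eq_mkG_iff_exists_fin {n : ℕ} (hn : 0 < n) {z w : ℂ} :
    mkG z = mkG w ↔ ∃ m : Fin n, mkGn n z = mkGn n (w + m) := by
  simp only [mkG_eq_mkG_iff, mkGn_eq_mkGn_iff, ← sub_sub]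
  refine ⟨exists_fin_sub_mem_Δn hn, fun ⟨m, hm⟩ ↦ ?_⟩
  have hmΔ : (m : ℂ) ∈ Δ := mem_Δ_iff.2 ⟨m, 0, by simp⟩
  simpa using Δ.add_mem (Δn_le_Δ n hm) hmΔ

def curveE (n k : ℕ) (b : ℂ) : Set (An n) := {p | ∃ z : ℂ, p = (mkG (ρ ^ k * z - b), mkGn n z)}

lemma E1_eq_curveE (n : ℕ) : E1 n = curveE n 0 0 := by simp [E1, curveE]

lemma E2_eq_curveE (n : ℕ) : E2 n = curveE n 1 a := by simp [E2, curveE]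

lemma E3_eq_curveE (n : ℕ) : E3 n = curveE n 2 (2 * a) := rfl

lemma mk_mem_curveE_iff {n : ℕ} (hn : 0 < n) {k : ℕ} {b c : ℂ} (hc : mkG (ρ ^ k * c - b) = mkG c)
    (ζ : Gn n) : (mkG c, ζ) ∈ curveE n k b ↔ ∃ m : Fin n, ζ = mkGn n (c + m) := by
  simp only [curveE, Set.mem_ofPred_eq, Prod.mk.injEq]
  rw [← hc]
  simp_rw [mkG_rho_pow_mul_sub_eq_iff, eq_comm (a := mkG c), mkG_eq_mkG_iff_exists_fin hn]
  constructor
  · rintro ⟨z, ⟨m, hm⟩, rfl⟩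
    exact ⟨m, hm⟩
  · rintro ⟨m, rfl⟩
    exact ⟨c + m, ⟨m, rfl⟩, rfl⟩

noncomputable def hCoord (l : ℕ) : ℂ := 2 / 3 + l * a

lemma mkG_rho_mul_hCoord_sub_a (l : ℕ) : mkG (ρ ^ 1 * hCoord l - a) = mkG (hCoord l) := by
  rw [mkG_eq_mkG_iff, mem_Δ_iff]
  refine ⟨-1, l + 1, ?_⟩
  simp only [hCoord, a]
  push_cast
  linear_combination (l / 3 : ℂ) * rho_sq_add_rho_add_one

lemma mkG_rho_sq_mul_hCoord_sub_two_a (l : ℕ) :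
    mkG (ρ ^ 2 * hCoord l - 2 * a) = mkG (hCoord l) := by
  rw [mkG_eq_mkG_iff, mem_Δ_iff]
  refine ⟨-2 - l, 0, ?_⟩
  simp only [hCoord, a]
  push_cast
  linear_combination (l * ρ / 3 - 2 * (1 + l) / 3 : ℂ) * rho_sq_add_rho_add_one

lemma mk_hCoord_mem_E_union_iff {n : ℕ} (hn : 0 < n) (l : ℕ) (ζ : Gn n) :
    (mkG (hCoord l), ζ) ∈ E1 n ∪ E2 n ∪ E3 n ↔ ∃ m : Fin n, ζ = mkGn n (hCoord l + m) := by
  rw [E1_eq_curveE, E2_eq_curveE, E3_eq_curveE]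
  simp only [Set.mem_union, mk_mem_curveE_iff hn (by simp : mkG (ρ ^ 0 * hCoord l - 0) = _),
    mk_mem_curveE_iff hn (mkG_rho_mul_hCoord_sub_a l),
    mk_mem_curveE_iff hn (mkG_rho_sq_mul_hCoord_sub_two_a l), or_self]

lemma mk_mem_H_union_iff {n : ℕ} (x : G) (ζ : Gn n) :
    (x, ζ) ∈ H1 n ∪ H2 n ∪ H3 n ↔ ∃ l : Fin 3, x = mkG (hCoord l) := by
  simp [H1, H2, H3, hCoord, Fin.exists_fin_succ, or_assoc, one_add_one_eq_two]

lemma P_eq (n : ℕ) (l : Fin 3) (m : Fin n) : P n l m = (mkG (hCoord l), mkGn n (hCoord l + m)) :=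
  rfl

/-- `(E₁ ∪ E₂ ∪ E₃) ∩ (H₁ ∪ H₂ ∪ H₃)` is exactly the set of the `3n` points
`P_{l,m}`. -/
theorem stmt13 (n : ℕ) (hn : 0 < n) :
    (E1 n ∪ E2 n ∪ E3 n) ∩ (H1 n ∪ H2 n ∪ H3 n)
      = {p | ∃ (l : Fin 3) (m : Fin n), p = P n l m} := by
  ext ⟨x, ζ⟩
  simp only [Set.mem_inter_iff, mk_mem_H_union_iff, Set.mem_ofPred_eq, P_eq, Prod.mk.injEq]
  constructor
  · rintro ⟨hE, l, rfl⟩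
    obtain ⟨m, rfl⟩ := (mk_hCoord_mem_E_union_iff hn l ζ).1 hE
    exact ⟨l, m, rfl, rfl⟩
  · rintro ⟨l, m, rfl, rfl⟩
    exact ⟨(mk_hCoord_mem_E_union_iff hn l _).2 ⟨m, rfl⟩, l, rfl⟩
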